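/- arXiv:1502.06834 — 2 statements merged into one kernel-verified Lean document; each statement's English description precedes it below -/
import Mathlib

section
/- Let a and b be coprime integers such that a·b is odd. Then there exists a 2×2 integer matrix M with determinant ±1 whose four entries have even sum, such that M applied to the column vector (1,1) equals the column vector (a,b). -/
/-- Odd-parity case: if `a` and `b` are coprime integers with `a * b` odd, then there is a
2×2 integer matrix of determinant ±1 whose four entries have even sum and which sends the
column vector (1,1) to (a,b). -/
theorem exists_even_unimodular_matrix_to_one_one
    (a b : ℤ) (hcop : IsCoprime a b) (hodd : Odd (a * b)) :
    ∃ M : Matrix (Fin 2) (Fin 2) ℤ,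
      (M.det = 1 ∨ M.det = -1) ∧
      Even (M 0 0 + M 0 1 + M 1 0 + M 1 1) ∧
      M.mulVec ![1, 1] = ![a, b] := by
  obtain ⟨u, v, huv⟩ := hcop
  refine ⟨!![v, a - v; -u, b + u], Or.inl ?_, ?_, ?_⟩
  · rw [Matrix.det_fin_two_of]; linarith
  · have ha : Odd a := (Int.odd_mul.mp hodd).1
    have hb : Odd b := (Int.odd_mul.mp hodd).2
    have : Even (a + b) := ha.add_odd hb
    have h : (!![v, a - v; -u, b + u] : Matrix (Fin 2) (Fin 2) ℤ) 0 0 +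
        !![v, a - v; -u, b + u] 0 1 + !![v, a - v; -u, b + u] 1 0 +
        !![v, a - v; -u, b + u] 1 1 = a + b := by
      simp [Matrix.cons_val_zero, Matrix.cons_val_one]; ring
    rw [h]; exact ha.add_odd hb
  · funext i
    fin_cases i <;> simp [Matrix.mulVec, dotProduct, Fin.sum_univ_two] <;> ring_nf
end

section
/- Let a and b be coprime integers such that a·b is even. Then there exists a 2×2 integer matrix M with determinant ±1 whose four entries have even sum, such that M applied to the column vector (1,0) equals the column vector (a,b). -/
/-- Even-parity case: if `a` and `b` are coprime integers with `a * b` even, then there is a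
2×2 integer matrix of determinant ±1 whose four entries have even sum and which sends the
column vector (1,0) to (a,b). -/
theorem exists_even_unimodular_matrix_to_one_zero
    (a b : ℤ) (hcop : IsCoprime a b) (heven : Even (a * b)) :
    ∃ M : Matrix (Fin 2) (Fin 2) ℤ,
      (M.det = 1 ∨ M.det = -1) ∧
      Even (M 0 0 + M 0 1 + M 1 0 + M 1 1) ∧
      M.mulVec ![1, 0] = ![a, b] := by
  obtain ⟨u, v, h⟩ := hcop
  -- not both even
  have hnb : ¬ (Even a ∧ Even b) := by
    rintro ⟨ha, hb⟩
    have : Even (u * a + v * b) := (ha.mul_left u).add (hb.mul_left v)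
    rw [h] at this
    have := Int.even_iff.mp this; omega
  have hone : Even a ∨ Even b := Int.even_mul.mp heven
  have hodd : ¬ Even (a + b) := by
    rcases hone with ha | hb
    · have hb : ¬ Even b := fun hb => hnb ⟨ha, hb⟩
      rw [Int.even_add]; tauto
    · have ha : ¬ Even a := fun ha => hnb ⟨ha, hb⟩
      rw [Int.even_add]; tauto
  -- two candidate Bezout pairs of opposite parity
  have key : ∀ u v : ℤ, u * a + v * b = 1 → Even (a + -v + b + u) →
      ∃ M : Matrix (Fin 2) (Fin 2) ℤ,
      (M.det = 1 ∨ M.det = -1) ∧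
      Even (M 0 0 + M 0 1 + M 1 0 + M 1 1) ∧
      M.mulVec ![1, 0] = ![a, b] := by
    intro u v h hp
    refine ⟨!![a, -v; b, u], Or.inl ?_, ?_, ?_⟩
    · simp [Matrix.det_fin_two_of]; linarith
    · simpa using hp
    · funext i
      fin_cases i <;> simp [Matrix.mulVec, dotProduct]
  by_cases hp : Even (a + -v + b + u)
  · exact key u v h hp
  · refine key (u + b) (v - a) (by ring_nf; linarith) ?_
    have : Odd (a + b) := Int.not_even_iff_odd.mp hodd
    have hS : Odd (a + -v + b + u) := Int.not_even_iff_odd.mp hp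
    have := hS.add_odd this
    have heq : a + -(v - a) + b + (u + b) = (a + -v + b + u) + (a + b) := by ring
    rw [heq]
    exact this
end
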